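/- arXiv:1509.00069 — 4 statements merged into one kernel-verified Lean document; each statement's English description precedes it below -/
import Mathlib

section
/- If a coalition structure π with payoff allocation x admits an o-profitable deviation by a set of players S, then the coalition structure π' resulting from that deviation has strictly larger social welfare: SW(π') > SW(π). -/
/-- `π` is a (discrete) coalition structure for `N` players with resource bound `R`:
a finite multiset of nonzero resource vectors (each entry `≤ R`) whose componentwise
sum is at most `R` for every player. -/
def IsCoalitionStructure (N R : ℕ) (π : Multiset (Fin N → ℕ)) : Prop :=
  (∀ r ∈ π, r ≠ 0 ∧ ∀ i, r i ≤ R) ∧ ∀ i : Fin N, (π.map (fun r => r i)).sum ≤ R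

/-- `x` is a payoff allocation for `π` with respect to the value function `v`. -/
def IsPayoffAllocation {N : ℕ} (v : (Fin N → ℕ) → ℝ) (π : Multiset (Fin N → ℕ))
    (x : (Fin N → ℕ) → Fin N → ℝ) : Prop :=
  ∀ r ∈ π, ((∑ i, x r i) = v r ∧ ∀ i, r i = 0 → x r i = 0)

/-- Player `i`'s total payoff `p_i(π, x)`. -/
noncomputable def totalPayoff {N : ℕ} (π : Multiset (Fin N → ℕ))
    (x : (Fin N → ℕ) → Fin N → ℝ) (i : Fin N) : ℝ :=
  (π.map (fun r => x r i)).sum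

/-- Social welfare of a coalition structure. -/
noncomputable def SW {N : ℕ} (v : (Fin N → ℕ) → ℝ) (π : Multiset (Fin N → ℕ)) : ℝ :=
  (π.map v).sum

/-- `π|_S` : the sub-multiset of coalitions of `π` whose support is contained in `S`. -/
def inS {N : ℕ} (S : Finset (Fin N)) (π : Multiset (Fin N → ℕ)) : Multiset (Fin N → ℕ) :=
  π.filter (fun r => ∀ i, r i ≠ 0 → i ∈ S)

/-- `π \ π|_S` : the sub-multiset of coalitions of `π` involving players outside `S`. -/
def outS {N : ℕ} (S : Finset (Fin N)) (π : Multiset (Fin N → ℕ)) : Multiset (Fin N → ℕ) :=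
  π.filter (fun r => ¬ ∀ i, r i ≠ 0 → i ∈ S)

/-- A deviation by the set of players `S` on the structure `π`:
withdrawals `d r ≤ r` supported in `S` for the partially deviated coalitions
`r ∈ π \ π|_S`, and a coalition structure `πS` supported in `S` built from the
deviators' own resources `π|_S` plus the withdrawn resources. -/
def IsDeviation (N R : ℕ) (S : Finset (Fin N)) (π : Multiset (Fin N → ℕ))
    (d : (Fin N → ℕ) → (Fin N → ℕ)) (πS : Multiset (Fin N → ℕ)) : Prop :=
  (∀ r ∈ outS S π, (∀ i, d r i ≤ r i) ∧ ∀ i, d r i ≠ 0 → i ∈ S) ∧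
  IsCoalitionStructure N R πS ∧
  (∀ r ∈ πS, ∀ i, r i ≠ 0 → i ∈ S) ∧
  (∀ i : Fin N, (πS.map (fun r => r i)).sum ≤
      ((inS S π).map (fun r => r i)).sum + ((outS S π).map (fun r => d r i)).sum)

/-- The deviation `(d, πS)` by `S` on `(π, x)` is o-profitable (w.r.t. the optimistic
arbitration function). -/
def OProfitable {N : ℕ} (v : (Fin N → ℕ) → ℝ) (S : Finset (Fin N))
    (π : Multiset (Fin N → ℕ)) (x : (Fin N → ℕ) → Fin N → ℝ)
    (d : (Fin N → ℕ) → (Fin N → ℕ)) (πS : Multiset (Fin N → ℕ)) : Prop :=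
  ∑ i ∈ S, totalPayoff π x i <
    (πS.map v).sum + ((outS S π).map (fun r => v (r - d r) - ∑ i ∈ Sᶜ, x r i)).sum

/-- The coalition structure resulting from the deviation `(d, πS)` by `S` on `π`:
`πS` together with the nonzero reduced coalitions `r - d r`, `r ∈ π \ π|_S`. -/
def resultStructure {N : ℕ} (S : Finset (Fin N)) (π : Multiset (Fin N → ℕ))
    (d : (Fin N → ℕ) → (Fin N → ℕ)) (πS : Multiset (Fin N → ℕ)) : Multiset (Fin N → ℕ) :=
  πS + (((outS S π).map (fun r => r - d r)).filter (fun r => r ≠ 0))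

/-- If `(π, x)` admits an o-profitable deviation by `S`, then the
resulting coalition structure has strictly larger social welfare. -/
theorem oProfitable_deviation_increases_social_welfare
    (N R : ℕ) (v : (Fin N → ℕ) → ℝ) (hv : ∀ r, 0 ≤ v r) (hv0 : v 0 = 0)
    (π : Multiset (Fin N → ℕ)) (hπ : IsCoalitionStructure N R π)
    (x : (Fin N → ℕ) → Fin N → ℝ) (hx : IsPayoffAllocation v π x)
    (S : Finset (Fin N)) (d : (Fin N → ℕ) → (Fin N → ℕ)) (πS : Multiset (Fin N → ℕ))
    (hdev : IsDeviation N R S π d πS)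
    (hprof : OProfitable v S π x d πS) :
    SW v π < SW v (resultStructure S π d πS) := by
  classical
  -- sum swap lemma
  have hswap : ∀ (m : Multiset (Fin N → ℕ)),
      ∑ i ∈ S, (m.map (fun r => x r i)).sum = (m.map (fun r => ∑ i ∈ S, x r i)).sum := by
    intro m
    induction m using Multiset.induction with
    | empty => simp
    | cons a s ih => simp [Finset.sum_add_distrib, ih]
  have hpart : inS S π + outS S π = π := Multiset.filter_add_not _ π
  -- SW π splits
  have hSW : SW v π = ((inS S π).map v).sum + ((outS S π).map v).sum := by
    rw [SW]
    conv_lhs => rw [← hpart]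
    simp [Multiset.map_add]
  -- payoff sum
  have hpay : ∑ i ∈ S, totalPayoff π x i
      = ((inS S π).map v).sum
        + ((outS S π).map (fun r => v r - ∑ i ∈ Sᶜ, x r i)).sum := by
    unfold totalPayoff
    conv_lhs => rw [← hpart]
    simp only [Multiset.map_add, Multiset.sum_add, Finset.sum_add_distrib]
    rw [hswap, hswap]
    congr 1
    · congr 1
      apply Multiset.map_congr rfl
      intro r hr
      have hrπ : r ∈ π := Multiset.mem_of_mem_filter hr
      have hS : ∀ i, r i ≠ 0 → i ∈ S := Multiset.of_mem_filter hr
      have := hx r hrπ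
      rw [← this.1]
      apply Finset.sum_subset (Finset.subset_univ S)
      intro i _ hiS
      exact this.2 i (by by_contra h; exact hiS (hS i h))
    · congr 1
      apply Multiset.map_congr rfl
      intro r hr
      have hrπ : r ∈ π := Multiset.mem_of_mem_filter hr
      have := (hx r hrπ).1
      have h2 := Finset.sum_add_sum_compl S (fun i => x r i)
      rw [this] at h2
      linarith
  -- SW of result
  have hres : SW v (resultStructure S π d πS)
      = (πS.map v).sum + ((outS S π).map (fun r => v (r - d r))).sum := by
    unfold SW resultStructure
    simp only [Multiset.map_add, Multiset.sum_add]
    congr 1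
    have hmm : (outS S π).map (fun r => v (r - d r))
        = ((outS S π).map (fun r => r - d r)).map v := by
      rw [Multiset.map_map]; rfl
    rw [hmm]
    set m := (outS S π).map (fun r => r - d r) with hm
    have : m = m.filter (fun r => r ≠ 0) + m.filter (fun r => ¬ r ≠ 0) :=
      (Multiset.filter_add_not _ m).symm
    conv_rhs => rw [this]
    simp only [Multiset.map_add, Multiset.sum_add]
    have hz : ((m.filter (fun r => ¬ r ≠ 0)).map v).sum = 0 := by
      apply Multiset.sum_eq_zero
      intro a ha
      obtain ⟨r, hr, rfl⟩ := Multiset.mem_map.1 ha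
      have := Multiset.of_mem_filter hr
      simp only [ne_eq, not_not] at this
      rw [this, hv0]
    rw [hz, add_zero]
  -- profitability
  rw [OProfitable] at hprof
  rw [hpay] at hprof
  have hsub : ((outS S π).map (fun r => v (r - d r) - ∑ i ∈ Sᶜ, x r i)).sum
      = ((outS S π).map (fun r => v (r - d r))).sum
        - ((outS S π).map (fun r => ∑ i ∈ Sᶜ, x r i)).sum := by
    rw [← Multiset.sum_map_sub]
  have hsub2 : ((outS S π).map (fun r => v r - ∑ i ∈ Sᶜ, x r i)).sum
      = ((outS S π).map v).sum - ((outS S π).map (fun r => ∑ i ∈ Sᶜ, x r i)).sum := by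
    rw [← Multiset.sum_map_sub]
  rw [hsub, hsub2] at hprof
  rw [hSW, hres]
  linarith
end

section
/- If a coalition structure π maximizes social welfare among all coalition structures, then for every payoff allocation x for π, no set of players S admits an o-profitable deviation on (π, x); that is, (π, x) is o-stable (lies in the o-core). -/
/-!
After a deviation by `S`, the coalitions of `πS` together with the nonzero residues `r - d r`
of the partially deviated coalitions form a coalition structure. By efficiency, the payoff of
`S` is `SW(π|_S) + Σ_{r ∈ π \ π|_S} (v r - Σ_{i ∉ S} x_i(r))`, so the payoffs of the players
outside `S` cancel from the o-profitability inequality, which then says that this new structure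
has strictly larger social welfare than `π`.
-/

open Finset

lemma Multiset.sum_map_filter_ne_zero {α M : Type*} [Zero α] [DecidablePred (· ≠ (0 : α))]
    [AddCommMonoid M] (m : Multiset α) {f : α → M} (hf : f 0 = 0) :
    ((m.filter (· ≠ 0)).map f).sum = (m.map f).sum := by
  induction m using Multiset.induction with
  | empty => simp
  | cons a m ih => by_cases ha : a = 0 <;> simp [ha, hf, ih]

section Coalitions

variable {N R : ℕ} {S : Finset (Fin N)} {π πS : Multiset (Fin N → ℕ)}
  {d : (Fin N → ℕ) → (Fin N → ℕ)} {v : (Fin N → ℕ) → ℝ} {x : (Fin N → ℕ) → Fin N → ℝ}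

lemma sum_map_inS_add_sum_map_outS {M : Type*} [AddCommMonoid M] (S : Finset (Fin N))
    (π : Multiset (Fin N → ℕ)) (f : (Fin N → ℕ) → M) :
    ((inS S π).map f).sum + ((outS S π).map f).sum = (π.map f).sum := by
  rw [inS, outS, ← Multiset.sum_add, ← Multiset.map_add, Multiset.filter_add_not]

lemma IsDeviation.isCoalitionStructure_resultStructure (hπ : IsCoalitionStructure N R π)
    (hdev : IsDeviation N R S π d πS) : IsCoalitionStructure N R (resultStructure S π d πS) := by
  obtain ⟨hd, hπS, -, hbudget⟩ := hdev
  refine ⟨fun r hr => ?_, fun i => ?_⟩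
  · rcases Multiset.mem_add.1 hr with hr | hr
    · exact hπS.1 r hr
    obtain ⟨hr, hne⟩ := Multiset.mem_filter.1 hr
    obtain ⟨s, hs, rfl⟩ := Multiset.mem_map.1 hr
    exact ⟨hne, fun i => (Nat.sub_le _ _).trans ((hπ.1 s (Multiset.mem_of_mem_filter hs)).2 i)⟩
  · have hresidue : ((outS S π).map fun r => r i - d r i).sum + ((outS S π).map (d · i)).sum
        = ((outS S π).map (· i)).sum := by
      rw [← Multiset.sum_map_add]
      exact congrArg _ (Multiset.map_congr rfl fun r hr => Nat.sub_add_cancel ((hd r hr).1 i))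
    calc ((resultStructure S π d πS).map (· i)).sum
        = (πS.map (· i)).sum + ((outS S π).map fun r => r i - d r i).sum := by
          simp only [resultStructure, Multiset.map_add, Multiset.sum_add,
            Multiset.sum_map_filter_ne_zero (f := fun r : Fin N → ℕ => r i) _ rfl, Multiset.map_map]
          rfl
      _ ≤ ((inS S π).map (· i)).sum + ((outS S π).map (· i)).sum := by
          have := hbudget i
          omega
      _ = (π.map (· i)).sum := sum_map_inS_add_sum_map_outS S π _
      _ ≤ R := hπ.2 i

lemma SW_resultStructure (hv0 : v 0 = 0) :
    SW v (resultStructure S π d πS) = SW v πS + ((outS S π).map fun r => v (r - d r)).sum := by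
  simp only [SW, resultStructure, Multiset.map_add, Multiset.sum_add,
    Multiset.sum_map_filter_ne_zero _ hv0, Multiset.map_map]
  rfl

lemma IsPayoffAllocation.sum_eq_sub_sum_compl (hx : IsPayoffAllocation v π x)
    {r : Fin N → ℕ} (hr : r ∈ π) (S : Finset (Fin N)) :
    ∑ i ∈ S, x r i = v r - ∑ i ∈ Sᶜ, x r i := by
  rw [← (hx r hr).1, ← sum_add_sum_compl S]
  ring

lemma IsPayoffAllocation.sum_compl_eq_zero (hx : IsPayoffAllocation v π x)
    {r : Fin N → ℕ} (hr : r ∈ inS S π) : ∑ i ∈ Sᶜ, x r i = 0 := by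
  obtain ⟨hrπ, hsupp⟩ := Multiset.mem_filter.1 hr
  refine sum_eq_zero fun i hi => (hx r hrπ).2 i ?_
  by_contra hne
  exact mem_compl.1 hi (hsupp i hne)

lemma IsPayoffAllocation.sum_totalPayoff_eq (hx : IsPayoffAllocation v π x)
    (S : Finset (Fin N)) :
    ∑ i ∈ S, totalPayoff π x i
      = SW v (inS S π) + ((outS S π).map fun r => v r - ∑ i ∈ Sᶜ, x r i).sum := by
  have hsplit := sum_map_inS_add_sum_map_outS S π fun r => ∑ i ∈ S, x r i
  simp only [totalPayoff, ← Multiset.sum_map_sum, ← hsplit, SW]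
  congr 2
  · refine Multiset.map_congr rfl fun r hr => ?_
    rw [hx.sum_eq_sub_sum_compl (Multiset.mem_of_mem_filter hr), hx.sum_compl_eq_zero hr, sub_zero]
  · exact Multiset.map_congr rfl fun r hr => hx.sum_eq_sub_sum_compl (Multiset.mem_of_mem_filter hr) S

lemma OProfitable.SW_lt_SW_resultStructure (hx : IsPayoffAllocation v π x) (hv0 : v 0 = 0)
    (hprof : OProfitable v S π x d πS) : SW v π < SW v (resultStructure S π d πS) := by
  rw [OProfitable, hx.sum_totalPayoff_eq, Multiset.sum_map_sub, Multiset.sum_map_sub] at hprof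
  rw [SW_resultStructure hv0, SW, ← sum_map_inS_add_sum_map_outS S π v]
  rw [SW] at hprof ⊢
  linarith

end Coalitions

theorem maximal_social_welfare_in_o_core_general
    (N R : ℕ) (v : (Fin N → ℕ) → ℝ) (hv0 : v 0 = 0)
    (π : Multiset (Fin N → ℕ)) (hπ : IsCoalitionStructure N R π)
    (hmax : ∀ π' : Multiset (Fin N → ℕ), IsCoalitionStructure N R π' → SW v π' ≤ SW v π)
    (x : (Fin N → ℕ) → Fin N → ℝ) (hx : IsPayoffAllocation v π x) :
    ¬ ∃ (S : Finset (Fin N)) (d : (Fin N → ℕ) → (Fin N → ℕ))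
        (πS : Multiset (Fin N → ℕ)),
      IsDeviation N R S π d πS ∧ OProfitable v S π x d πS := by
  rintro ⟨S, d, πS, hdev, hprof⟩
  exact (hmax _ (hdev.isCoalitionStructure_resultStructure hπ)).not_gt
    (hprof.SW_lt_SW_resultStructure hx hv0)

/-- A coalition structure maximizing social welfare is o-stable:
no set of players admits an o-profitable deviation, for any payoff allocation. -/
theorem maximal_social_welfare_in_o_core
    (N R : ℕ) (v : (Fin N → ℕ) → ℝ) (hv : ∀ r, 0 ≤ v r) (hv0 : v 0 = 0)
    (π : Multiset (Fin N → ℕ)) (hπ : IsCoalitionStructure N R π)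
    (hmax : ∀ π' : Multiset (Fin N → ℕ), IsCoalitionStructure N R π' → SW v π' ≤ SW v π)
    (x : (Fin N → ℕ) → Fin N → ℝ) (hx : IsPayoffAllocation v π x) :
    ¬ ∃ (S : Finset (Fin N)) (d : (Fin N → ℕ) → (Fin N → ℕ))
        (πS : Multiset (Fin N → ℕ)),
      IsDeviation N R S π d πS ∧ OProfitable v S π x d πS :=
  maximal_social_welfare_in_o_core_general N R v hv0 π hπ hmax x hx
end

section
/- There is no infinite sequence (π_k, x_k), k ∈ ℕ, of coalition structures π_k with payoff allocations x_k such that for every k, π_{k+1} is the coalition structure resulting from some o-profitable deviation on (π_k, x_k); equivalently, any process of successive o-profitable deviations in a discrete OCF game terminates after finitely many steps. -/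
lemma mysum_comm {α β M : Type*} [AddCommMonoid M] (s : Finset β) (π : Multiset α)
    (f : α → β → M) :
    ∑ i ∈ s, (π.map (fun r => f r i)).sum = (π.map (fun r => ∑ i ∈ s, f r i)).sum := by
  induction π using Multiset.induction_on with
  | empty => simp
  | cons a t ih => simp [Finset.sum_add_distrib, ih]

lemma my_sum_map_sub {α : Type*} (m : Multiset α) (f g : α → ℝ) :
    (m.map (fun r => f r - g r)).sum = (m.map f).sum - (m.map g).sum := by
  induction m using Multiset.induction_on with
  | empty => simp
  | cons a t ih => simp [ih]; ring

lemma SW_lt {N : ℕ} {v : (Fin N → ℕ) → ℝ} (hv0 : v 0 = 0)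
    {S : Finset (Fin N)} {π : Multiset (Fin N → ℕ)} {x : (Fin N → ℕ) → Fin N → ℝ}
    {d : (Fin N → ℕ) → (Fin N → ℕ)} {πS : Multiset (Fin N → ℕ)}
    (hx : IsPayoffAllocation v π x)
    (hprof : OProfitable v S π x d πS) :
    SW v π < SW v (resultStructure S π d πS) := by
  classical
  have hsplit : inS S π + outS S π = π := Multiset.filter_add_not _ π
  -- sum of payoffs over S
  have h1 : ∑ i ∈ S, totalPayoff π x i
      = ((inS S π).map v).sum + ((outS S π).map (fun r => v r - ∑ i ∈ Sᶜ, x r i)).sum := by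
    unfold totalPayoff
    rw [mysum_comm]
    conv_lhs => rw [← hsplit]
    rw [Multiset.map_add, Multiset.sum_add]
    congr 1
    · apply congrArg Multiset.sum
      apply Multiset.map_congr rfl
      intro r hr
      have hrπ : r ∈ π := Multiset.mem_of_mem_filter hr
      have hrS : ∀ i, r i ≠ 0 → i ∈ S := Multiset.of_mem_filter hr
      have hc : ∑ i ∈ Sᶜ, x r i = 0 := by
        apply Finset.sum_eq_zero
        intro i hi
        exact (hx r hrπ).2 i (by by_contra h; exact (Finset.mem_compl.mp hi) (hrS i h))
      have := (hx r hrπ).1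
      rw [← Finset.sum_add_sum_compl S (x r)] at this
      rw [hc, add_zero] at this
      exact this
    · apply congrArg Multiset.sum
      apply Multiset.map_congr rfl
      intro r hr
      have hrπ : r ∈ π := Multiset.mem_of_mem_filter hr
      have := (hx r hrπ).1
      rw [← Finset.sum_add_sum_compl S (x r)] at this
      linarith
  have h2 := hprof
  unfold OProfitable at h2
  rw [h1] at h2
  rw [my_sum_map_sub (outS S π) v (fun r => ∑ i ∈ Sᶜ, x r i),
      my_sum_map_sub (outS S π) (fun r => v (r - d r)) (fun r => ∑ i ∈ Sᶜ, x r i)] at h2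
  -- filtered result sum
  have h3 : ((((outS S π).map (fun r => r - d r)).filter (fun r => r ≠ 0)).map v).sum
      = (((outS S π).map (fun r => r - d r)).map v).sum := by
    set m := (outS S π).map (fun r => r - d r) with hm
    conv_rhs => rw [← Multiset.filter_add_not (fun r => r ≠ 0) m]
    rw [Multiset.map_add, Multiset.sum_add]
    have : ((m.filter (fun r => ¬ r ≠ 0)).map v).sum = 0 := by
      apply Multiset.sum_eq_zero
      intro a ha
      obtain ⟨r, hr, rfl⟩ := Multiset.mem_map.mp ha
      have : r = 0 := by simpa using Multiset.of_mem_filter hr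
      rw [this, hv0]
    rw [this, add_zero]
  unfold SW resultStructure
  conv_lhs => rw [← hsplit]
  rw [Multiset.map_add, Multiset.sum_add, Multiset.map_add, Multiset.sum_add, h3,
      Multiset.map_map]
  simp only [Function.comp] at *
  linarith


lemma finite_structures (N R : ℕ) :
    {π : Multiset (Fin N → ℕ) | IsCoalitionStructure N R π}.Finite := by
  classical
  set base : Multiset (Fin N → ℕ) :=
    (Finset.univ : Finset (Fin N → Fin (R+1))).val.map (fun f => fun i => (f i : ℕ)) with hbase
  set M0 : Multiset (Fin N → ℕ) := (N*R) • base with hM0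
  apply Set.Finite.subset (Multiset.finite_toSet M0.powerset)
  intro π hπ
  obtain ⟨h1, h2⟩ := hπ
  simp only [Set.mem_setOf_eq, Multiset.mem_powerset]
  -- card bound
  have hcard : Multiset.card π ≤ N * R := by
    have e1 : (Multiset.card π : ℕ) = (π.map (fun _ => (1:ℕ))).sum := by
      simp [Multiset.map_const]
    have e2 : (π.map (fun _ => (1:ℕ))).sum ≤ (π.map (fun r => ∑ i, r i)).sum := by
      apply Multiset.sum_map_le_sum_map
      intro r hr
      obtain ⟨i, hi⟩ := Function.ne_iff.mp (h1 r hr).1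
      exact Finset.single_le_sum (f := fun i => r i) (fun _ _ => Nat.zero_le _)
        (Finset.mem_univ i) |>.trans' (Nat.one_le_iff_ne_zero.mpr (by simpa using hi))
    have e3 : (π.map (fun r => ∑ i, r i)).sum = ∑ i : Fin N, (π.map (fun r => r i)).sum :=
      (mysum_comm Finset.univ π (fun r i => r i)).symm
    have e4 : ∑ i : Fin N, (π.map (fun r => r i)).sum ≤ ∑ _i : Fin N, R :=
      Finset.sum_le_sum (fun i _ => h2 i)
    simp only [Finset.sum_const, Finset.card_univ, Fintype.card_fin, smul_eq_mul] at e4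
    rw [e1]
    refine e2.trans ?_
    rw [e3]
    exact e4
  rw [Multiset.le_iff_count]
  intro r
  by_cases hr : r ∈ π
  · have hc1 : Multiset.count r π ≤ N * R := (Multiset.count_le_card r π).trans hcard
    have hmem : r ∈ base := by
      rw [hbase, Multiset.mem_map]
      refine ⟨fun i => ⟨r i, Nat.lt_succ_of_le ((h1 r hr).2 i)⟩, Finset.mem_univ_val _, ?_⟩
      funext i; rfl
    have : 1 ≤ Multiset.count r base := Multiset.one_le_count_iff_mem.mpr hmem
    rw [hM0, Multiset.count_nsmul]
    calc Multiset.count r π ≤ N * R := hc1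
      _ = N * R * 1 := (mul_one _).symm
      _ ≤ N * R * Multiset.count r base := Nat.mul_le_mul_left _ this
  · simp [Multiset.count_eq_zero_of_notMem hr]

/-- There is no infinite sequence of successive o-profitable
deviations: any such process terminates after finitely many steps. -/
theorem no_infinite_sequence_of_oProfitable_deviations
    (N R : ℕ) (v : (Fin N → ℕ) → ℝ) (hv : ∀ r, 0 ≤ v r) (hv0 : v 0 = 0) :
    ¬ ∃ (π : ℕ → Multiset (Fin N → ℕ)) (x : ℕ → (Fin N → ℕ) → Fin N → ℝ),
      (∀ k, IsCoalitionStructure N R (π k)) ∧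
      (∀ k, IsPayoffAllocation v (π k) (x k)) ∧
      (∀ k, ∃ (S : Finset (Fin N)) (d : (Fin N → ℕ) → (Fin N → ℕ))
          (πS : Multiset (Fin N → ℕ)),
        IsDeviation N R S (π k) d πS ∧ OProfitable v S (π k) (x k) d πS ∧
        π (k + 1) = resultStructure S (π k) d πS) := by
  rintro ⟨π, x, hcs, hpa, hdev⟩
  have hmono : ∀ k, SW v (π k) < SW v (π (k+1)) := by
    intro k
    obtain ⟨S, d, πS, _, hp, heq⟩ := hdev k
    rw [heq]
    exact SW_lt hv0 (hpa k) hp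
  have hsm : StrictMono (fun k => SW v (π k)) := strictMono_nat_of_lt_succ hmono
  have hfin : (SW v '' {π' | IsCoalitionStructure N R π'}).Finite :=
    (finite_structures N R).image _
  exact hfin.not_infinite
    (Set.infinite_of_injective_forall_mem hsm.injective
      (fun k => Set.mem_image_of_mem _ (hcs k)))
end

section
/- The superadditive cover satisfies the dynamic-programming recurrence: for every resource supply W : Fin N → ℕ with W ≠ 0 and W(i) ≤ R for all i, v*(W) = max over nonzero vectors r with r(i) ≤ W(i) for all i of ( v(r) + v*(W − r) ), where W − r denotes componentwise subtraction. -/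
/-- `Π(W)`: the set of finite multisets of nonzero resource vectors (entries `≤ R`)
whose componentwise sum is at most `W i` for every player `i`. -/
def PiW (N R : ℕ) (W : Fin N → ℕ) : Set (Multiset (Fin N → ℕ)) :=
  {π | (∀ r ∈ π, r ≠ 0 ∧ ∀ i, r i ≤ R) ∧ ∀ i : Fin N, (π.map (fun r => r i)).sum ≤ W i}

/-- The superadditive cover `v*(W) = sup_{π ∈ Π(W)} Σ_{r ∈ π} v(r)`. -/
noncomputable def vstar (N R : ℕ) (v : (Fin N → ℕ) → ℝ) (W : Fin N → ℕ) : ℝ :=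
  sSup ((fun π : Multiset (Fin N → ℕ) => (π.map v).sum) '' PiW N R W)

/-!
`Π(W)` is finite: its members draw from the finitely many vectors with entries `≤ R`, and,
every vector being nonzero, have at most `Σ i, W i` elements. So the supremum defining
`v*(W)` is attained by some `π`. If `π` is empty then `v*(W) = 0`, and `r = W` attains the
maximum as all terms are nonnegative; otherwise splitting off one `r ∈ π` leaves a
partition of `W - r`. Conversely, adding `r` to a partition of `W - r` gives one of `W`.
-/

open Multiset

variable {N R : ℕ}

lemma card_le_of_mem_piW {W : Fin N → ℕ} {π : Multiset (Fin N → ℕ)} (hπ : π ∈ PiW N R W) :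
    card π ≤ ∑ i, W i := by
  have hpos : ∀ r ∈ π.map (fun r => ∑ i, r i), 1 ≤ r := by
    simp only [mem_map, forall_exists_index, and_imp, forall_apply_eq_imp_iff₂]
    intro r hr
    exact Nat.one_le_iff_ne_zero.mpr fun h0 =>
      (hπ.1 r hr).1 (funext fun i => by simpa using Finset.sum_eq_zero_iff.mp h0 i)
  calc card π = card π • 1 := by simp
    _ ≤ (π.map fun r => ∑ i, r i).sum := by simpa using card_nsmul_le_sum hpos
    _ = ∑ i, (π.map fun r => r i).sum := sum_map_sum_map π Finset.univ.val
    _ ≤ ∑ i, W i := Finset.sum_le_sum fun i _ => hπ.2 i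

lemma finite_piW (W : Fin N → ℕ) : (PiW N R W).Finite := by
  set box := Finset.Icc (0 : Fin N → ℕ) (fun _ => R)
  refine (Set.finite_Iic ((∑ i, W i) • box.val)).subset fun π hπ => ?_
  rw [Set.mem_Iic, le_iff_count]
  intro a
  by_cases ha : a ∈ π
  · have ha_box : a ∈ box := Finset.mem_Icc.mpr ⟨fun _ => Nat.zero_le _, (hπ.1 a ha).2⟩
    calc count a π ≤ ∑ i, W i := (count_le_card a π).trans (card_le_of_mem_piW hπ)
      _ ≤ (∑ i, W i) * count a box.val :=
          Nat.le_mul_of_pos_right _ (count_pos.mpr (Finset.mem_val.mpr ha_box))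
      _ = count a ((∑ i, W i) • box.val) := (count_nsmul _ _ _).symm
  · simp [count_eq_zero_of_notMem ha]

lemma zero_mem_piW (W : Fin N → ℕ) : (0 : Multiset (Fin N → ℕ)) ∈ PiW N R W :=
  ⟨by simp, by simp⟩

lemma le_of_cons_mem_piW {W r : Fin N → ℕ} {π : Multiset (Fin N → ℕ)}
    (h : r ::ₘ π ∈ PiW N R W) (i : Fin N) : r i ≤ W i :=
  (Nat.le_add_right _ _).trans (by simpa using h.2 i)

lemma cons_mem_piW_iff {W r : Fin N → ℕ} {π : Multiset (Fin N → ℕ)} (hrW : ∀ i, r i ≤ W i) :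
    r ::ₘ π ∈ PiW N R W ↔ (r ≠ 0 ∧ ∀ i, r i ≤ R) ∧ π ∈ PiW N R (W - r) := by
  simp only [PiW, Set.mem_ofPred_eq, forall_mem_cons, map_cons, sum_cons, Pi.sub_apply,
    le_tsub_iff_left (hrW _)]
  tauto

section vstar

variable (v : (Fin N → ℕ) → ℝ)

lemma sum_map_le_vstar {W : Fin N → ℕ} {π : Multiset (Fin N → ℕ)} (hπ : π ∈ PiW N R W) :
    (π.map v).sum ≤ vstar N R v W :=
  le_csSup ((finite_piW W).image _).bddAbove ⟨π, hπ, rfl⟩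

lemma exists_mem_piW_sum_map_eq_vstar (W : Fin N → ℕ) :
    ∃ π ∈ PiW N R W, (π.map v).sum = vstar N R v W :=
  ((Set.nonempty_of_mem (zero_mem_piW W)).image _).csSup_mem ((finite_piW W).image _)

lemma vstar_nonneg (W : Fin N → ℕ) : 0 ≤ vstar N R v W := by
  simpa using sum_map_le_vstar v (zero_mem_piW (R := R) W)

lemma add_vstar_sub_le_vstar {W r : Fin N → ℕ} (hWR : ∀ i, W i ≤ R) (hr : r ≠ 0)
    (hrW : ∀ i, r i ≤ W i) : v r + vstar N R v (W - r) ≤ vstar N R v W := by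
  obtain ⟨π, hπ, hsum⟩ := exists_mem_piW_sum_map_eq_vstar (R := R) v (W - r)
  have hmem : r ::ₘ π ∈ PiW N R W :=
    (cons_mem_piW_iff hrW).mpr ⟨⟨hr, fun i => (hrW i).trans (hWR i)⟩, hπ⟩
  simpa [hsum] using sum_map_le_vstar v hmem

lemma exists_vstar_le_add_vstar_sub (hv : ∀ r, 0 ≤ v r) {W : Fin N → ℕ} (hW : W ≠ 0) :
    ∃ r, r ≠ 0 ∧ (∀ i, r i ≤ W i) ∧ vstar N R v W ≤ v r + vstar N R v (W - r) := by
  obtain ⟨π, hπ, hsum⟩ := exists_mem_piW_sum_map_eq_vstar (R := R) v W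
  rcases empty_or_exists_mem π with rfl | ⟨r, hr⟩
  · refine ⟨W, hW, fun _ => le_rfl, ?_⟩
    rw [← hsum, map_zero, sum_zero]
    exact add_nonneg (hv W) (vstar_nonneg v _)
  · obtain ⟨π', rfl⟩ := exists_cons_of_mem hr
    have hrW := le_of_cons_mem_piW hπ
    obtain ⟨⟨hr0, -⟩, hπ'⟩ := (cons_mem_piW_iff hrW).mp hπ
    refine ⟨r, hr0, hrW, ?_⟩
    rw [← hsum, map_cons, sum_cons]
    exact add_le_add_right (sum_map_le_vstar v hπ') _

end vstar

theorem vstar_recurrence_general (N R : ℕ) (v : (Fin N → ℕ) → ℝ)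
    (hv : ∀ r, 0 ≤ v r)
    (W : Fin N → ℕ) (hW : W ≠ 0) (hWR : ∀ i, W i ≤ R) :
    IsGreatest
      {y : ℝ | ∃ r : Fin N → ℕ, r ≠ 0 ∧ (∀ i, r i ≤ W i) ∧
        y = v r + vstar N R v (W - r)}
      (vstar N R v W) := by
  refine ⟨?_, fun y ⟨r, hr, hrW, hy⟩ => hy ▸ add_vstar_sub_le_vstar v hWR hr hrW⟩
  obtain ⟨r, hr, hrW, hle⟩ := exists_vstar_le_add_vstar_sub (R := R) v hv hW
  exact ⟨r, hr, hrW, le_antisymm hle (add_vstar_sub_le_vstar v hWR hr hrW)⟩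

/-- The dynamic-programming recurrence for the superadditive cover:
for nonzero `W` with `W i ≤ R`, `v*(W)` is the maximum of `v(r) + v*(W - r)` over all
nonzero `r` with `r i ≤ W i` componentwise. -/
theorem vstar_recurrence (N R : ℕ) (v : (Fin N → ℕ) → ℝ)
    (hv : ∀ r, 0 ≤ v r) (hv0 : v 0 = 0)
    (W : Fin N → ℕ) (hW : W ≠ 0) (hWR : ∀ i, W i ≤ R) :
    IsGreatest
      {y : ℝ | ∃ r : Fin N → ℕ, r ≠ 0 ∧ (∀ i, r i ≤ W i) ∧
        y = v r + vstar N R v (W - r)}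
      (vstar N R v W) :=
  vstar_recurrence_general N R v hv W hW hWR
end
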